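/- Let n ≥ 2, let W ⊆ ℝⁿ be open, p ∈ W, and let ξ : W → ℝⁿ be a C¹ vector field with ξ(p) ≠ 0. Let f², …, fⁿ : W → ℝ be C¹ solutions of the homogeneous equation Σ_α ξ^α(x) ∂f^i/∂x^α(x) = 0 whose differentials df²(p), …, dfⁿ(p) are linearly independent. Then for every C¹ function h : W → ℝ satisfying Σ_α ξ^α(x) ∂h/∂x^α(x) = 0 on W, there exist an open neighbourhood V of p with V ⊆ W and a function Φ : ℝ^{n−1} → ℝ such that h(x) = Φ(f²(x), …, fⁿ(x)) for all x ∈ V. -/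

import Mathlib

/-!
Complete the differentials `dfⁱ(p)` by a covector `c` to a basis of the dual space; by the
inverse function theorem `G x = (c x, f x)` is then a local diffeomorphism near `p`. Wherever
`dG` is invertible, the common kernel of the `dfⁱ` is a line containing `ξ ≠ 0`, so `dh`
vanishes on it; in the chart `G` this kernel is the first coordinate direction. Hence `h ∘ G⁻¹`
is constant along the first coordinate on a product ball, i.e. `h` depends on `f` alone.
-/

open Set

/-- Partial derivative `∂φ/∂xⁱ` of a scalar function on `ℝⁿ`. -/
noncomputable def pd {n : ℕ} (i : Fin n) (φ : (Fin n → ℝ) → ℝ) (x : Fin n → ℝ) : ℝ :=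
  fderiv ℝ φ x (Pi.single i 1)

open Function Metric Module

theorem mem_span_singleton_of_injective_prod {K E F : Type*} [Field K] [AddCommGroup E]
    [Module K E] [AddCommGroup F] [Module K F] {c : E →ₗ[K] K} {L : E →ₗ[K] F}
    (hinj : Injective (c.prod L)) {v w : E} (hv : v ≠ 0) (hLv : L v = 0) (hLw : L w = 0) :
    w ∈ K ∙ v := by
  have hcv : c v ≠ 0 := fun h0 => hv (hinj (by simp [h0, hLv]))
  refine Submodule.mem_span_singleton.2 ⟨c w / c v, hinj ?_⟩
  simp [hLv, hLw, div_mul_cancel₀ _ hcv]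

theorem finrank_strongDual {𝕜 E : Type*} [NontriviallyNormedField 𝕜] [CompleteSpace 𝕜]
    [NormedAddCommGroup E] [NormedSpace 𝕜 E] [FiniteDimensional 𝕜 E] :
    finrank 𝕜 (E →L[𝕜] 𝕜) = finrank 𝕜 E := by
  rw [← (LinearMap.toContinuousLinearMap : (E →ₗ[𝕜] 𝕜) ≃ₗ[𝕜] _).finrank_eq,
    Module.finrank_linearMap, Module.finrank_self, mul_one]

theorem ContinuousLinearMap.isInvertible_of_injective {𝕜 E F : Type*} [NontriviallyNormedField 𝕜]
    [CompleteSpace 𝕜] [NormedAddCommGroup E] [NormedSpace 𝕜 E] [FiniteDimensional 𝕜 E]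
    [NormedAddCommGroup F] [NormedSpace 𝕜 F] [FiniteDimensional 𝕜 F] {A : E →L[𝕜] F}
    (hA : Injective A) (hdim : finrank 𝕜 E = finrank 𝕜 F) : A.IsInvertible :=
  ⟨((A : E →ₗ[𝕜] F).linearEquivOfInjective hA hdim).toContinuousLinearEquiv, rfl⟩

theorem exists_isInvertible_prod_pi {E : Type*} [NormedAddCommGroup E] [NormedSpace ℝ E]
    [FiniteDimensional ℝ E] {m : ℕ} (L : Fin m → E →L[ℝ] ℝ) (hL : LinearIndependent ℝ L)
    (hdim : finrank ℝ E = m + 1) :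
    ∃ c : E →L[ℝ] ℝ, (c.prod (ContinuousLinearMap.pi L)).IsInvertible := by
  have hspan_ne_top : Submodule.span ℝ (Set.range L) ≠ ⊤ := fun htop => by
    have := finrank_span_eq_card hL
    rw [htop, finrank_top, finrank_strongDual, Fintype.card_fin] at this
    omega
  obtain ⟨c, hc⟩ := SetLike.exists_not_mem_of_ne_top _ hspan_ne_top rfl
  have hspan : Submodule.span ℝ (Set.range (Fin.cons c L : Fin (m + 1) → _)) = ⊤ :=
    (hL.finCons hc).span_eq_top_of_card_eq_finrank (by simp [finrank_strongDual, hdim])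
  refine ⟨c, ContinuousLinearMap.isInvertible_of_injective ?_ (by simp [hdim, add_comm])⟩
  refine (injective_iff_map_eq_zero _).2 fun v hv => ?_
  have hkills : Submodule.span ℝ (Set.range (Fin.cons c L : Fin (m + 1) → _)) ≤
      LinearMap.ker (ContinuousLinearMap.apply ℝ ℝ v : (E →L[ℝ] ℝ) →ₗ[ℝ] ℝ) := by
    rw [Submodule.span_le]
    rintro _ ⟨j, rfl⟩
    refine Fin.cases ?_ (fun i => ?_) j
    · simpa using congrArg Prod.fst hv
    · simpa using congrFun (congrArg Prod.snd hv) i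
  rw [hspan] at hkills
  exact SeparatingDual.eq_zero_of_forall_dual_eq_zero fun φ => hkills Submodule.mem_top

variable {E F : Type*} [NormedAddCommGroup E] [NormedSpace ℝ E] [NormedAddCommGroup F]
  [NormedSpace ℝ F]

def IsFirstIntegralOn (ξ : E → E) (φ : E → F) (U : Set E) : Prop :=
  ∀ x ∈ U, fderiv ℝ φ x (ξ x) = 0

theorem IsFirstIntegralOn.mono {ξ : E → E} {φ : E → F} {U U' : Set E}
    (hφ : IsFirstIntegralOn ξ φ U) (hU' : U' ⊆ U) : IsFirstIntegralOn ξ φ U' :=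
  fun x hx => hφ x (hU' hx)

theorem IsFirstIntegralOn.pi {ι : Type*} [Fintype ι] {ξ : E → E} {φ : ι → E → F} {U : Set E}
    (hd : ∀ i, ∀ x ∈ U, DifferentiableAt ℝ (φ i) x) (hφ : ∀ i, IsFirstIntegralOn ξ (φ i) U) :
    IsFirstIntegralOn ξ (fun x i => φ i x) U := fun x hx => by
  ext i
  simpa [fderiv_pi fun i => hd i x hx] using hφ i x hx

theorem hasDerivAt_comp_symm_eq_zero {Ψ : OpenPartialHomeomorph E (ℝ × F)} {c : E →L[ℝ] ℝ}
    {g : E → F} (hΨ : ⇑Ψ = fun x => (c x, g x)) {t : ℝ} {z : F} (hy : (t, z) ∈ Ψ.target)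
    {g' : E →L[ℝ] F} (hg : HasFDerivAt g g' (Ψ.symm (t, z))) (hinv : (c.prod g').IsInvertible)
    {h : E → ℝ} {h' : E →L[ℝ] ℝ} (hh : HasFDerivAt h h' (Ψ.symm (t, z))) {v : E} (hv : v ≠ 0)
    (hg'v : g' v = 0) (hh'v : h' v = 0) :
    HasDerivAt (fun s => h (Ψ.symm (s, z))) 0 t := by
  obtain ⟨B, hB⟩ := hinv
  have hΨ' : HasFDerivAt Ψ (B : E →L[ℝ] ℝ × F) (Ψ.symm (t, z)) := by
    rw [hΨ, hB]; exact c.hasFDerivAt.prodMk hg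
  have hline : HasDerivAt (fun s : ℝ => (s, z)) ((1 : ℝ), (0 : F)) t :=
    (hasDerivAt_id t).prodMk (hasDerivAt_const t z)
  have hcurve := (Ψ.hasFDerivAt_symm hy hΨ').comp_hasDerivAt t hline
  -- the velocity `B⁻¹ (1, 0)` of the curve lies in `ker g'`, which is the line through `v`
  have hBw : (c.prod g') (B.symm ((1 : ℝ), (0 : F))) = (1, 0) := by
    rw [← hB]; exact B.apply_symm_apply _
  have hinj : Injective (c.prod g') := by
    rw [← hB]; exact B.injective
  obtain ⟨a, ha⟩ := Submodule.mem_span_singleton.1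
    (mem_span_singleton_of_injective_prod (L := (g' : E →ₗ[ℝ] F)) hinj hv hg'v
      (congrArg Prod.snd hBw))
  simpa [← ha, hh'v, comp_def] using hh.comp_hasDerivAt t hcurve

theorem isOpen_setOf_isInvertible_prod_fderiv [CompleteSpace E] {U : Set E} (hU : IsOpen U)
    {g : E → F} (hg : ContDiffOn ℝ 1 g U) (c : E →L[ℝ] ℝ) :
    IsOpen {x | x ∈ U ∧ (c.prod (fderiv ℝ g x)).IsInvertible} := by
  have hcont : ContinuousOn (fun x => c.prod (fderiv ℝ g x)) U :=
    (ContinuousLinearMap.prodₗᵢ ℝ).continuous.comp_continuousOn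
      (continuousOn_const.prodMk (hg.continuousOn_fderiv_of_isOpen hU le_rfl))
  exact hcont.isOpen_inter_preimage hU ContinuousLinearEquiv.isOpen

theorem IsFirstIntegralOn.exists_factorsThrough [CompleteSpace E] {ξ : E → E} {g : E → F}
    {h : E → ℝ} {U : Set E} {p : E} (hU : IsOpen U) (hp : p ∈ U) (hξ : ∀ x ∈ U, ξ x ≠ 0)
    (hg : ContDiffOn ℝ 1 g U) (hgξ : IsFirstIntegralOn ξ g U) (hh : DifferentiableOn ℝ h U)
    (hhξ : IsFirstIntegralOn ξ h U) {c : E →L[ℝ] ℝ} (hc : (c.prod (fderiv ℝ g p)).IsInvertible) :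
    ∃ V, IsOpen V ∧ p ∈ V ∧ V ⊆ U ∧ (V.domRestrict h).FactorsThrough (V.domRestrict g) := by
  set U' := {x | x ∈ U ∧ (c.prod (fderiv ℝ g x)).IsInvertible}
  have hU' : IsOpen U' := isOpen_setOf_isInvertible_prod_fderiv hU hg c
  obtain ⟨B, hB⟩ := hc
  have hgp : ContDiffAt ℝ 1 g p := hg.contDiffAt (hU.mem_nhds hp)
  have hGp : HasFDerivAt (fun x => (c x, g x)) (B : E →L[ℝ] ℝ × F) p := by
    rw [hB]; exact c.hasFDerivAt.prodMk (hgp.differentiableAt one_ne_zero).hasFDerivAt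
  set Ψ := (c.contDiff.contDiffAt.prodMk hgp).toOpenPartialHomeomorph _ hGp one_ne_zero
  have hΨ : ⇑Ψ = fun x => (c x, g x) := rfl
  have hpΨ : p ∈ Ψ.source := ContDiffAt.mem_toOpenPartialHomeomorph_source _ _ _
  obtain ⟨r, hr, hball⟩ : ∃ r > 0, ball (Ψ p) r ⊆ Ψ.target ∩ Ψ.symm ⁻¹' U' := by
    refine Metric.mem_nhds_iff.1 (Filter.inter_mem (Ψ.open_target.mem_nhds (Ψ.map_source hpΨ)) ?_)
    refine Ψ.continuousAt_symm (Ψ.map_source hpΨ) (hU'.mem_nhds ?_)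
    rw [Ψ.left_inv hpΨ]
    exact ⟨hp, B, hB⟩
  refine ⟨Ψ.source ∩ Ψ ⁻¹' ball (Ψ p) r, Ψ.isOpen_inter_preimage isOpen_ball,
    ⟨hpΨ, mem_ball_self hr⟩, fun x hx => ?_, ?_⟩
  · have := (hball hx.2).2.1
    rwa [Ψ.left_inv hx.1] at this
  rintro ⟨x, hxΨ, hx⟩ ⟨x', hx'Ψ, hx'⟩ (hgx : g x = g x')
  show h x = h x'
  rw [hΨ, ← ball_prod_same] at hx hx'
  have hline : ∀ s ∈ ball (c p) r, HasDerivAt (fun s => h (Ψ.symm (s, g x))) 0 s := by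
    intro s hs
    have hy : (s, g x) ∈ ball (Ψ p) r := by rw [hΨ, ← ball_prod_same]; exact ⟨hs, hx.2⟩
    obtain ⟨hyΨ, hyU, hyinv⟩ := hball hy
    exact hasDerivAt_comp_symm_eq_zero hΨ hyΨ
      ((hg.differentiableOn one_ne_zero _ hyU).differentiableAt (hU.mem_nhds hyU)).hasFDerivAt
      hyinv ((hh _ hyU).differentiableAt (hU.mem_nhds hyU)).hasFDerivAt (hξ _ hyU)
      (hgξ _ hyU) (hhξ _ hyU)
  have hconst := isOpen_ball.is_const_of_deriv_eq_zero (convex_ball (c p) r).isPreconnected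
    (fun s hs => (hline s hs).differentiableAt.differentiableWithinAt)
    (fun s hs => (hline s hs).deriv) hx.1 hx'.1
  have hxx : Ψ.symm (c x, g x) = x := Ψ.left_inv hxΨ
  have hxx' : Ψ.symm (c x', g x) = x' := by rw [hgx]; exact Ψ.left_inv hx'Ψ
  simpa only [hxx, hxx'] using hconst

theorem sum_mul_pd_eq_fderiv_apply {n : ℕ} (φ : (Fin n → ℝ) → ℝ) (x v : Fin n → ℝ) :
    ∑ α, v α * pd α φ x = fderiv ℝ φ x v := by
  conv_rhs => rw [← Finset.univ_sum_single v, map_sum]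
  refine Finset.sum_congr rfl fun α _ => ?_
  rw [pd, ← smul_eq_mul, ← map_smul, ← Pi.single_smul', smul_eq_mul, mul_one]

theorem isFirstIntegralOn_iff_sum_mul_pd {n : ℕ} {ξ : (Fin n → ℝ) → Fin n → ℝ}
    {φ : (Fin n → ℝ) → ℝ} {U : Set (Fin n → ℝ)} :
    IsFirstIntegralOn ξ φ U ↔ ∀ x ∈ U, ∑ α, ξ x α * pd α φ x = 0 := by
  simp only [IsFirstIntegralOn, sum_mul_pd_eq_fderiv_apply]

theorem first_integral_is_function_of_independent_integrals_general
    (n : ℕ)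
    (W : Set (Fin n → ℝ)) (hW : IsOpen W) (p : Fin n → ℝ) (hp : p ∈ W)
    (ξ : (Fin n → ℝ) → (Fin n → ℝ)) (hξ : ContDiffOn ℝ 1 ξ W) (hξp : ξ p ≠ 0)
    (f : Fin (n - 1) → (Fin n → ℝ) → ℝ)
    (hf : ∀ i, ContDiffOn ℝ 1 (f i) W)
    (hfsol : ∀ i, ∀ x ∈ W, ∑ α, ξ x α * pd α (f i) x = 0)
    (hind : LinearIndependent ℝ (fun i : Fin (n - 1) => fderiv ℝ (f i) p))
    (h : (Fin n → ℝ) → ℝ) (hh : ContDiffOn ℝ 1 h W)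
    (hhsol : ∀ x ∈ W, ∑ α, ξ x α * pd α h x = 0) :
    ∃ (V : Set (Fin n → ℝ)), IsOpen V ∧ p ∈ V ∧ V ⊆ W ∧
      ∃ Φ : (Fin (n - 1) → ℝ) → ℝ, ∀ x ∈ V, h x = Φ (fun i => f i x) := by
  have hn : n - 1 + 1 = n := Nat.succ_pred_eq_of_ne_zero fun hn0 => hξp <| by
    subst hn0; exact Subsingleton.elim _ _
  have hfd : ∀ i, ∀ x ∈ W, DifferentiableAt ℝ (f i) x := fun i x hx =>
    ((hf i).contDiffAt (hW.mem_nhds hx)).differentiableAt one_ne_zero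
  set U := W ∩ ξ ⁻¹' {0}ᶜ
  have hUW : U ⊆ W := inter_subset_left
  obtain ⟨c, hc⟩ := exists_isInvertible_prod_pi _ hind (by rw [finrank_fin_fun, hn])
  obtain ⟨V, hV, hpV, hVU, hfac⟩ := IsFirstIntegralOn.exists_factorsThrough
    (hξ.continuousOn.isOpen_inter_preimage hW isOpen_compl_singleton) ⟨hp, hξp⟩
    (fun x hx => hx.2) ((contDiffOn_pi.2 hf).mono hUW)
    ((IsFirstIntegralOn.pi hfd fun i => isFirstIntegralOn_iff_sum_mul_pd.2 (hfsol i)).mono hUW)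
    ((hh.differentiableOn one_ne_zero).mono hUW)
    ((isFirstIntegralOn_iff_sum_mul_pd.2 hhsol).mono hUW)
    (by rwa [fderiv_pi fun i => hfd i p hp])
  exact ⟨V, hV, hpV, hVU.trans hUW, extend (V.domRestrict fun x i => f i x) (V.domRestrict h) 0,
    fun x hx => (hfac.extend_apply _ ⟨x, hx⟩).symm⟩

/-- Key claim in the proof of Proposition 2: every `C¹` first integral `h` of the
vector field `ξ` is locally a functional composition `Φ(f², …, fⁿ)` of `n − 1`
functionally independent first integrals `f², …, fⁿ`. -/
theorem first_integral_is_function_of_independent_integrals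
    (n : ℕ) (hn : 2 ≤ n)
    (W : Set (Fin n → ℝ)) (hW : IsOpen W) (p : Fin n → ℝ) (hp : p ∈ W)
    (ξ : (Fin n → ℝ) → (Fin n → ℝ)) (hξ : ContDiffOn ℝ 1 ξ W) (hξp : ξ p ≠ 0)
    (f : Fin (n - 1) → (Fin n → ℝ) → ℝ)
    (hf : ∀ i, ContDiffOn ℝ 1 (f i) W)
    (hfsol : ∀ i, ∀ x ∈ W, ∑ α, ξ x α * pd α (f i) x = 0)
    (hind : LinearIndependent ℝ (fun i : Fin (n - 1) => fderiv ℝ (f i) p))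
    (h : (Fin n → ℝ) → ℝ) (hh : ContDiffOn ℝ 1 h W)
    (hhsol : ∀ x ∈ W, ∑ α, ξ x α * pd α h x = 0) :
    ∃ (V : Set (Fin n → ℝ)), IsOpen V ∧ p ∈ V ∧ V ⊆ W ∧
      ∃ Φ : (Fin (n - 1) → ℝ) → ℝ, ∀ x ∈ V, h x = Φ (fun i => f i x) :=
  first_integral_is_function_of_independent_integrals_general n W hW p hp ξ hξ hξp f hf hfsol hind h
    hh hhsol
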